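/- Let k be a field, A = k_{p_{ij}}[x_1,…,x_n] a skew polynomial ring, and R = k[x_1^{α_1},…,x_n^{α_n}] a central subalgebra of A, where α_i are positive integers (so each x_i^{α_i} is central). Then A is a free R-module of rank r = ∏ α_i with basis Z = {x_1^{β_1}⋯x_n^{β_n} : 0 ≤ β_i < α_i}, and with tr : A → R the regular trace, det(tr(z_i z_j))_{r×r} = c · r^r · (∏_{i=1}^n x_i^{α_i−1})^r for some c ∈ k^×. -/

import Mathlib

noncomputable section

/-- The defining relations of the skew polynomial ring `k_{p_{ij}}[x_1, …, x_n]`: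
for `i < j`, `x_j * x_i` is identified with `p i j * (x_i * x_j)`. -/
def skewRel (k : Type*) [CommRing k] (n : ℕ) (p : Fin n → Fin n → k) :
    FreeAlgebra k (Fin n) → FreeAlgebra k (Fin n) → Prop := fun a b =>
  ∃ i j : Fin n, i < j ∧ a = FreeAlgebra.ι k j * FreeAlgebra.ι k i ∧
    b = algebraMap k _ (p i j) * (FreeAlgebra.ι k i * FreeAlgebra.ι k j)

/-- The skew polynomial ring `k_{p_{ij}}[x_1, …, x_n]`. -/
abbrev SkewPoly (k : Type*) [CommRing k] (n : ℕ) (p : Fin n → Fin n → k) :=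
  RingQuot (skewRel k n p)

/-- The generator `x_i` of the skew polynomial ring. -/
def SkewPoly.X (k : Type*) [CommRing k] (n : ℕ) (p : Fin n → Fin n → k) (i : Fin n) :
    SkewPoly k n p :=
  RingQuot.mkAlgHom k (skewRel k n p) (FreeAlgebra.ι k i)

/-!
The monomials `x^β` form a `k`-basis of `A` and multiply as `x^β x^γ = c • x^(β + γ)`, where
`c` is a product of powers of the `p i j`. Centrality of `x_j ^ α j` forces `p i j ^ α j = 1`
for `i < j`; hence `x^(α * q) x^γ = x^(α * q + γ)`, the image of `R` is spanned by the
`x^(α * q)`, and division with remainder of exponents by `α` shows that the `x^β` with `β < α`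
form an `R`-basis. In this basis left multiplication by `x^δ` permutes the basis vectors up
to scalars, with no fixed point unless `α ∣ δ`; so `tr (x^β x^γ) = 0` unless `γ = -β` in
`∏ ℤ/α_i`, and then it is a unit times `r • x^(β + γ)`. The trace matrix is a diagonal
matrix times the permutation matrix of `β ↦ -β`, and `∑_β (β + (-β)) = r • (α - 1)`
turns its determinant into a unit times `r^r (x^(α - 1))^r`.
-/

open Finsupp in
theorem LinearIndependent.of_smul_of_span_eq_top {R S M ι ι' : Type*} [CommSemiring R]
    [Semiring S] [AddCommMonoid M] [Module R S] [Module S M] [Module R M] [IsScalarTower R S M]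
    {v : ι → M} {w : ι' → S} (hw : Submodule.span R (Set.range w) = ⊤)
    (h : LinearIndependent R fun x : ι × ι' => w x.2 • v x.1) : LinearIndependent S v := by
  have hsurj : Function.Surjective (linearCombination R w) := by
    rw [← LinearMap.range_eq_top, range_linearCombination, hw]
  rw [LinearIndependent, linearCombination_smul, LinearMap.coe_comp, LinearMap.coe_comp] at h
  exact h.of_comp_right ((mapRange_surjective _ (map_zero _) hsurj).comp
    (curryLinearEquiv R).surjective)

theorem Matrix.det_of_ite_eq_perm {ι R : Type*} [DecidableEq ι] [Fintype ι] [CommRing R]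
    (σ : Equiv.Perm ι) (d : ι → R) :
    (Matrix.of fun i j => if j = σ i then d i else 0).det = Equiv.Perm.sign σ * ∏ i, d i := by
  have : (Matrix.of fun i j => if j = σ i then d i else 0) =
      (Matrix.diagonal d).submatrix id σ.symm := by
    ext i j
    simp [Matrix.diagonal_apply, Equiv.eq_symm_apply, eq_comm]
  rw [this, Matrix.det_permute', Matrix.det_diagonal, Equiv.Perm.sign_symm]

theorem Fintype.sum_comp_eval {ι M : Type*} [Fintype ι] [DecidableEq ι] [AddCommMonoid M]
    {β : ι → Type*} [∀ i, Fintype (β i)] (i : ι) (g : β i → M) :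
    ∑ f : (∀ j, β j), g (f i) =
      Fintype.card (∀ j : {j // j ≠ i}, β j) • ∑ x, g x := by
  rw [Fintype.sum_equiv (Equiv.piSplitAt i β) (fun f => g (f i)) (fun y => g y.1) fun _ => rfl,
    Fintype.sum_prod_type, Finset.smul_sum]
  simp

theorem Fintype.card_pi_eq_mul {ι : Type*} [Fintype ι] [DecidableEq ι]
    {β : ι → Type*} [∀ i, Fintype (β i)] (i : ι) :
    Fintype.card (∀ j, β j) =
      Fintype.card (β i) * Fintype.card (∀ j : {j // j ≠ i}, β j) := by
  rw [Fintype.card_congr (Equiv.piSplitAt i β), Fintype.card_prod]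

theorem pow_mul_pow_eq_smul_of_mul_eq_smul {k S : Type*} [CommSemiring k] [Semiring S]
    [Algebra k S] {x y : S} {c : k} (h : y * x = c • (x * y)) (a b : ℕ) :
    y ^ b * x ^ a = c ^ (a * b) • (x ^ a * y ^ b) := by
  have hy : ∀ a : ℕ, y * x ^ a = c ^ a • (x ^ a * y) := by
    intro a
    induction a with
    | zero => simp
    | succ a ih =>
      rw [pow_succ, ← mul_assoc, ih, smul_mul_assoc, mul_assoc, h, mul_smul_comm, smul_smul,
        ← mul_assoc, ← pow_succ, pow_succ]
  induction b with
  | zero => simp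
  | succ b ih =>
    rw [pow_succ, mul_assoc, hy, mul_smul_comm, ← mul_assoc, ih, smul_mul_assoc, smul_smul,
      mul_assoc, ← pow_succ, ← pow_add, Nat.mul_succ, add_comm a]

theorem sum_val_add_val_neg {n : ℕ} {α : Fin n → ℕ} (i : Fin n) :
    ∑ β : (j : Fin n) → Fin (α j), ((β i : ℕ) + ((-β) i : ℕ)) =
      (∏ j, α j) * (α i - 1) := by
  classical
  have hneg : ∑ β : (j : Fin n) → Fin (α j), ((-β) i : ℕ) =
      ∑ β : (j : Fin n) → Fin (α j), (β i : ℕ) :=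
    Fintype.sum_equiv (Equiv.neg _) _ _ fun _ => rfl
  have hfin : (∑ x : Fin (α i), (x : ℕ)) * 2 = α i * (α i - 1) := by
    rw [Fin.sum_univ_eq_sum_range (fun x => x), Finset.sum_range_id_mul_two]
  have hcard : ∏ j, α j = α i * Fintype.card (∀ j : {j // j ≠ i}, Fin (α j)) := by
    simpa using Fintype.card_pi_eq_mul (β := fun j => Fin (α j)) i
  have hcomp : ∑ β : (j : Fin n) → Fin (α j), (β i : ℕ) =
      Fintype.card (∀ j : {j // j ≠ i}, Fin (α j)) * ∑ x : Fin (α i), (x : ℕ) :=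
    Fintype.sum_comp_eval (β := fun j => Fin (α j)) i (fun x => (x : ℕ))
  rw [Finset.sum_add_distrib, hneg, ← mul_two, hcomp, mul_assoc, hfin, hcard]
  ring

namespace SkewPoly

section CommRing

variable {k : Type*} [CommRing k] {n : ℕ} (p : Fin n → Fin n → k)

local notation "A" => SkewPoly k n p
local notation "X" => SkewPoly.X k n p

theorem X_mul_X_of_lt {i j : Fin n} (h : i < j) : X j * X i = p i j • (X i * X j) := by
  simpa [SkewPoly.X, Algebra.smul_def] using RingQuot.mkAlgHom_rel k (s := skewRel k n p)
    ⟨i, j, h, rfl, rfl⟩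

theorem adjoin_range_X : Algebra.adjoin k (Set.range X) = ⊤ := by
  rw [show Set.range X = RingQuot.mkAlgHom k (skewRel k n p) '' Set.range (FreeAlgebra.ι k) by
      rw [← Set.range_comp]; rfl,
    ← AlgHom.map_adjoin, FreeAlgebra.adjoin_range_ι, Algebra.map_top, AlgHom.range_eq_top]
  exact RingQuot.mkAlgHom_surjective k _

def listMonomial (l : List (Fin n)) (β : Fin n → ℕ) : A :=
  (l.map fun i => X i ^ β i).prod

@[simp]
theorem listMonomial_nil (β : Fin n → ℕ) : listMonomial p [] β = 1 := rfl

@[simp]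
theorem listMonomial_cons (a : Fin n) (l : List (Fin n)) (β : Fin n → ℕ) :
    listMonomial p (a :: l) β = X a ^ β a * listMonomial p l β := by
  simp [listMonomial]

def monomial (β : Fin n → ℕ) : A :=
  listMonomial p (List.finRange n) β

/-- `∏ p a b ^ (β b * γ a)` over the pairs with `a` before `b` in `l`: the scalar in
`x^β x^γ = twist p β γ l • x^(β + γ)`. -/
def twist (β γ : Fin n → ℕ) : List (Fin n) → k
  | [] => 1
  | a :: l => (l.map fun j => p a j ^ (β j * γ a)).prod * twist β γ l

theorem listMonomial_mul_X_pow {l : List (Fin n)} {i : Fin n} (hl : ∀ j ∈ l, i < j)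
    (β : Fin n → ℕ) (c : ℕ) :
    listMonomial p l β * X i ^ c =
      (l.map fun j => p i j ^ (β j * c)).prod • (X i ^ c * listMonomial p l β) := by
  induction l with
  | nil => simp
  | cons a l ih =>
    rw [listMonomial_cons, mul_assoc, ih fun j hj => hl j (List.mem_cons_of_mem a hj),
      mul_smul_comm, ← mul_assoc,
      pow_mul_pow_eq_smul_of_mul_eq_smul (X_mul_X_of_lt p (hl a List.mem_cons_self)),
      smul_mul_assoc, smul_smul, mul_assoc, List.map_cons, List.prod_cons, mul_comm c, mul_comm]

theorem listMonomial_mul {l : List (Fin n)} (hl : l.Pairwise (· < ·)) (β γ : Fin n → ℕ) :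
    listMonomial p l β * listMonomial p l γ = twist p β γ l • listMonomial p l (β + γ) := by
  induction l with
  | nil => simp [twist]
  | cons a l ih =>
    obtain ⟨ha, hl⟩ := List.pairwise_cons.1 hl
    rw [listMonomial_cons, listMonomial_cons, listMonomial_cons, twist, mul_assoc,
      ← mul_assoc (listMonomial p l β), listMonomial_mul_X_pow p ha β, smul_mul_assoc,
      mul_assoc, ih hl]
    simp only [mul_smul_comm, smul_smul, ← mul_assoc, ← pow_add, Pi.add_apply]

theorem monomial_mul (β γ : Fin n → ℕ) :
    monomial p β * monomial p γ = twist p β γ (List.finRange n) • monomial p (β + γ) :=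
  listMonomial_mul p (List.pairwise_lt_finRange n) β γ

@[simp]
theorem monomial_zero : monomial p 0 = 1 := by
  simp [monomial, listMonomial]

theorem monomial_single (i : Fin n) (a : ℕ) : monomial p (Pi.single i a) = X i ^ a := by
  classical
  rw [monomial, listMonomial, List.prod_map_eq_pow_single i _ fun j hj _ => by simp [hj],
    List.count_eq_one_of_mem (List.nodup_finRange n) (List.mem_finRange i)]
  simp

theorem monomial_pow (β : Fin n → ℕ) (s : ℕ) :
    monomial p β ^ s =
      (∏ j ∈ Finset.range s, twist p (j • β) β (List.finRange n)) •
        monomial p (s • β) := by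
  induction s with
  | zero => simp
  | succ s ih =>
    rw [pow_succ, ih, smul_mul_assoc, monomial_mul, smul_smul, Finset.prod_range_succ,
      succ_nsmul]

theorem twist_eq_one {β γ : Fin n → ℕ} (h : ∀ a b, a < b → p a b ^ (β b * γ a) = 1)
    {l : List (Fin n)} (hl : l.Pairwise (· < ·)) : twist p β γ l = 1 := by
  induction l with
  | nil => rfl
  | cons a l ih =>
    obtain ⟨ha, hl⟩ := List.pairwise_cons.1 hl
    rw [twist, ih hl, mul_one]
    exact List.prod_eq_one (by simpa using fun j hj => h a j (ha j hj))

theorem isUnit_twist (h : ∀ a b, a < b → IsUnit (p a b)) (β γ : Fin n → ℕ)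
    {l : List (Fin n)} (hl : l.Pairwise (· < ·)) : IsUnit (twist p β γ l) := by
  induction l with
  | nil => exact isUnit_one
  | cons a l ih =>
    obtain ⟨ha, hl⟩ := List.pairwise_cons.1 hl
    refine IsUnit.mul ?_ (ih hl)
    exact List.prod_isUnit (by simpa using fun j hj => (h a j (ha j hj)).pow _)

theorem X_pow_mul_X_pow_of_lt {i j : Fin n} (h : i < j) (a b : ℕ) :
    X i ^ a * X j ^ b = monomial p (Pi.single i a + Pi.single j b) := by
  rw [← monomial_single, ← monomial_single, monomial_mul,
    twist_eq_one p _ (List.pairwise_lt_finRange n), one_smul]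
  intro a' b' hab
  rcases eq_or_ne b' i with rfl | hb
  · have ha : a' ≠ j := by rintro rfl; exact lt_asymm h hab
    simp [ha]
  · simp [hb]

/-- The coefficient in `x_i x^γ = shiftCoeff p i γ • x^(γ + e_i)`. -/
def shiftCoeff (i : Fin n) (γ : Fin n → ℕ) : k :=
  ∏ t ∈ Finset.Iio i, p t i ^ γ t

theorem shiftCoeff_add_single (i j : Fin n) (γ : Fin n → ℕ) :
    shiftCoeff p j (γ + Pi.single i 1) =
      if i < j then shiftCoeff p j γ * p i j else shiftCoeff p j γ := by
  classical
  simp only [shiftCoeff, Pi.add_apply, pow_add, Finset.prod_mul_distrib, Pi.single_apply,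
    pow_ite, pow_one, pow_zero, Finset.prod_ite_eq', Finset.mem_Iio]
  split_ifs <;> simp

theorem shiftCoeff_eq_one {i : Fin n} {γ : Fin n → ℕ} (h : ∀ t < i, γ t = 0) :
    shiftCoeff p i γ = 1 :=
  Finset.prod_eq_one fun t ht => by rw [h t (Finset.mem_Iio.1 ht), pow_zero]

def shiftOp (i : Fin n) : Module.End k ((Fin n → ℕ) →₀ k) :=
  Finsupp.lsum k fun γ => shiftCoeff p i γ • Finsupp.lsingle (γ + Pi.single i 1)

theorem shiftOp_single (i : Fin n) (γ : Fin n → ℕ) (c : k) :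
    shiftOp p i (Finsupp.single γ c) =
      shiftCoeff p i γ • Finsupp.single (γ + Pi.single i 1) c := by
  simp [shiftOp]

theorem shiftOp_mul_shiftOp_of_lt {i j : Fin n} (h : i < j) :
    shiftOp p j * shiftOp p i = p i j • (shiftOp p i * shiftOp p j) := by
  refine Finsupp.lhom_ext fun γ c => ?_
  simp only [Module.End.mul_apply, LinearMap.smul_apply, shiftOp_single, map_smul, smul_smul,
    shiftCoeff_add_single, if_pos h, if_neg (lt_asymm h), add_right_comm γ (Pi.single i 1)]
  ring_nf

/-- A representation of `A` on `k[ℕⁿ]` in which `x^β` sends `e_0` to `e_β`; it shows that the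
monomials are linearly independent. -/
def regularRep : A →ₐ[k] Module.End k ((Fin n → ℕ) →₀ k) :=
  RingQuot.liftAlgHom k ⟨FreeAlgebra.lift k (shiftOp p), by
    rintro _ _ ⟨i, j, h, rfl, rfl⟩
    simp only [map_mul, FreeAlgebra.lift_ι_apply, AlgHom.commutes]
    rw [← Algebra.smul_def]
    exact shiftOp_mul_shiftOp_of_lt p h⟩

@[simp]
theorem regularRep_X (i : Fin n) : regularRep p (X i) = shiftOp p i := by
  simp [regularRep, SkewPoly.X]

theorem shiftOp_pow_single {i : Fin n} {γ : Fin n → ℕ} (h : ∀ t < i, γ t = 0) (c : ℕ) :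
    (shiftOp p i ^ c) (Finsupp.single γ 1) = Finsupp.single (γ + Pi.single i c) 1 := by
  induction c with
  | zero => simp
  | succ c ih =>
    rw [pow_succ', Module.End.mul_apply, ih, shiftOp_single, shiftCoeff_eq_one, one_smul,
      add_assoc, ← Pi.single_add, Nat.add_one]
    intro t ht
    simp [h t ht, ht.ne]

theorem regularRep_listMonomial (β : Fin n → ℕ) {l : List (Fin n)} (hl : l.Pairwise (· < ·))
    {γ : Fin n → ℕ} (hγ : ∀ i ∈ l, ∀ t < i, γ t = 0) :
    regularRep p (listMonomial p l β) (Finsupp.single γ 1) =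
      Finsupp.single (γ + fun t => if t ∈ l then β t else 0) 1 := by
  induction l generalizing γ with
  | nil => simp; rfl
  | cons a l ih =>
    obtain ⟨ha, hl⟩ := List.pairwise_cons.1 hl
    have hγl : ∀ i ∈ l, ∀ t < i, γ t = 0 := fun i hi => hγ i (List.mem_cons_of_mem a hi)
    rw [listMonomial_cons, map_mul, Module.End.mul_apply, ih hl hγl, map_pow, regularRep_X,
      shiftOp_pow_single]
    · congr 1
      funext t
      by_cases hta : t = a
      · subst hta
        have : t ∉ l := fun h => lt_irrefl t (ha t h)
        simp [this]
      · simp [hta]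
    · intro t ht
      have : t ∉ l := fun h => lt_asymm ht (ha t h)
      simp [hγ a List.mem_cons_self t ht, this]

theorem regularRep_monomial (β : Fin n → ℕ) :
    regularRep p (monomial p β) (Finsupp.single 0 1) = Finsupp.single β 1 := by
  rw [monomial, regularRep_listMonomial p β (List.pairwise_lt_finRange n)
    (γ := 0) fun _ _ _ _ => rfl]
  simp

theorem linearIndependent_monomial : LinearIndependent k (monomial p) := by
  refine LinearIndependent.of_comp
    ((LinearMap.applyₗ (Finsupp.single 0 1)).comp (regularRep p).toLinearMap) ?_
  convert (Finsupp.basisSingleOne (R := k) (ι := Fin n → ℕ)).linearIndependent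
  funext β
  exact regularRep_monomial p β

theorem adjoin_le_span_monomial {Γ : AddSubmonoid (Fin n → ℕ)} {s : Set A}
    (hs : s ⊆ monomial p '' Γ) :
    Subalgebra.toSubmodule (Algebra.adjoin k s) ≤ Submodule.span k (monomial p '' Γ) := by
  let S := Submodule.span k (monomial p '' Γ)
  have hmul : S * S ≤ S := by
    rw [Submodule.span_mul_span, Submodule.span_le, Set.mul_subset_iff]
    rintro _ ⟨β, hβ, rfl⟩ _ ⟨γ, hγ, rfl⟩
    rw [monomial_mul]
    exact S.smul_mem _ (Submodule.subset_span ⟨β + γ, Γ.add_mem hβ hγ, rfl⟩)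
  have hone : (1 : A) ∈ S := Submodule.subset_span ⟨0, Γ.zero_mem, monomial_zero p⟩
  exact Algebra.adjoin_le (S := S.toSubalgebra hone fun x y hx hy =>
    hmul (Submodule.mul_mem_mul hx hy)) (hs.trans Submodule.subset_span)

theorem span_monomial : Submodule.span k (Set.range (monomial p)) = ⊤ := by
  rw [eq_top_iff, ← Set.image_univ, ← Algebra.top_toSubmodule, ← adjoin_range_X p]
  refine adjoin_le_span_monomial p (Γ := ⊤) ?_
  rintro _ ⟨i, rfl⟩
  exact ⟨Pi.single i 1, trivial, by rw [monomial_single, pow_one]⟩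

def monomialBasis : Module.Basis (Fin n → ℕ) k A :=
  Module.Basis.mk (linearIndependent_monomial p) (span_monomial p).ge

@[simp]
theorem monomialBasis_apply (β : Fin n → ℕ) : monomialBasis p β = monomial p β :=
  Module.Basis.mk_apply _ _ _

theorem pow_eq_one_of_commute [Nontrivial k] {i j : Fin n} (h : i < j) {b : ℕ}
    (hc : Commute (X j ^ b) (X i)) : p i j ^ b = 1 := by
  have hswap := pow_mul_pow_eq_smul_of_mul_eq_smul (X_mul_X_of_lt p h) 1 b
  rw [pow_one, one_mul, hc.eq, ← pow_one (X i), X_pow_mul_X_pow_of_lt p h 1 b] at hswap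
  have := congrArg (fun x => (monomialBasis p).repr x (Pi.single i 1 + Pi.single j b)) hswap
  simp only [← monomialBasis_apply, map_smul, Module.Basis.repr_self, Finsupp.smul_apply,
    Finsupp.single_eq_same, smul_eq_mul, mul_one] at this
  exact this.symm

end CommRing

section Residue

variable {n : ℕ} {α : Fin n → ℕ} [∀ i, NeZero (α i)]

variable (α) in
def residue (δ : Fin n → ℕ) : (i : Fin n) → Fin (α i) :=
  fun i => Fin.ofNat (α i) (δ i)

@[simp]
theorem residue_add (δ ε : Fin n → ℕ) :
    residue α (δ + ε) = residue α δ + residue α ε :=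
  funext fun i => Fin.ext <| by simp [residue, Fin.val_add, Nat.add_mod]

@[simp]
theorem residue_val (β : (i : Fin n) → Fin (α i)) : residue α (fun i => (β i : ℕ)) = β :=
  funext fun i => Fin.ext <| by simp [residue]

@[simp]
theorem residue_mul (q : Fin n → ℕ) : residue α (α * q) = 0 :=
  funext fun i => Fin.ext <| by simp [residue]

theorem mul_div_add_residue (δ : Fin n → ℕ) :
    α * (δ / α) + (fun i => (residue α δ i : ℕ)) = δ :=
  funext fun i => by simp [residue, Nat.div_add_mod]

@[simp]
theorem mul_add_val_div (q : Fin n → ℕ) (β : (i : Fin n) → Fin (α i)) :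
    (α * q + fun i => (β i : ℕ)) / α = q :=
  funext fun i => by simp [Nat.mul_add_div (NeZero.pos (α i)), Nat.div_eq_of_lt (β i).isLt]

end Residue

section Center

variable {k : Type*} [CommRing k] {n : ℕ} (p : Fin n → Fin n → k) {α : Fin n → ℕ}

local notation "A" => SkewPoly k n p
local notation "X" => SkewPoly.X k n p

theorem monomial_mul_mem_adjoin (q : Fin n → ℕ) :
    monomial p (α * q) ∈ Algebra.adjoin k (Set.range fun i => X i ^ α i) := by
  refine Subalgebra.list_prod_mem _ fun x hx => ?_
  obtain ⟨i, -, rfl⟩ := List.mem_map.1 hx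
  rw [Pi.mul_apply, pow_mul]
  exact pow_mem (Algebra.subset_adjoin (Set.mem_range_self i)) _

theorem monomial_mul_of_pow_eq_one (hp : ∀ i j, i < j → p i j ^ α j = 1)
    (q γ : Fin n → ℕ) :
    monomial p (α * q) * monomial p γ = monomial p (α * q + γ) := by
  rw [monomial_mul, twist_eq_one p _ (List.pairwise_lt_finRange n), one_smul]
  intro a b hab
  rw [Pi.mul_apply, mul_assoc, pow_mul, hp a b hab, one_pow]

variable {R : Type*} [CommRing R] [Algebra R (SkewPoly k n p)] {ρ : (Fin n → ℕ) → R}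

theorem algebraMap_prod (hp : ∀ i j, i < j → p i j ^ α j = 1)
    (hρ : ∀ q, algebraMap R A (ρ q) = monomial p (α * q)) {ι : Type*} (s : Finset ι)
    (q : ι → Fin n → ℕ) :
    algebraMap R A (∏ x ∈ s, ρ (q x)) = monomial p (α * ∑ x ∈ s, q x) := by
  classical
  induction s using Finset.induction_on with
  | empty => simp
  | insert x s hx ih =>
    rw [Finset.prod_insert hx, map_mul, hρ, ih, monomial_mul_of_pow_eq_one p hp,
      Finset.sum_insert hx, mul_add]

theorem span_range_eq_top_of_algebraMap_eq_monomial [Algebra k R] [IsScalarTower k R A]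
    (hinj : Function.Injective (algebraMap R A))
    (hrange : ∀ s, algebraMap R A s ∈ Algebra.adjoin k (Set.range fun i => X i ^ α i))
    (hρ : ∀ q, algebraMap R A (ρ q) = monomial p (α * q)) :
    Submodule.span k (Set.range ρ) = ⊤ := by
  have hle := adjoin_le_span_monomial p (Γ := AddMonoidHom.mrange (AddMonoidHom.mulLeft α))
    (s := Set.range fun i => X i ^ α i) <| by
      rintro _ ⟨i, rfl⟩
      refine ⟨α * Pi.single i 1, AddMonoidHom.mem_mrange.2 ⟨Pi.single i 1, rfl⟩, ?_⟩
      rw [← Pi.single_mul_right, mul_one, monomial_single]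
  refine eq_top_iff.2 fun s _ => ?_
  let f := (IsScalarTower.toAlgHom k R A).toLinearMap
  have hset :
      Set.range (f ∘ ρ) = monomial p '' AddMonoidHom.mrange (AddMonoidHom.mulLeft α) := by
    rw [AddMonoidHom.coe_mrange, ← Set.range_comp]
    exact congrArg Set.range (funext hρ)
  have hs : f s ∈ (Submodule.span k (Set.range ρ)).map f := by
    rw [Submodule.map_span, ← Set.range_comp, hset]
    exact hle (hrange s)
  obtain ⟨t, ht, hts⟩ := hs
  rwa [← hinj hts]

variable [∀ i, NeZero (α i)] (b : Module.Basis ((i : Fin n) → Fin (α i)) R (SkewPoly k n p))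

theorem repr_monomial (hp : ∀ i j, i < j → p i j ^ α j = 1)
    (hρ : ∀ q, algebraMap R A (ρ q) = monomial p (α * q))
    (hb : ∀ β, b β = monomial p fun i => (β i : ℕ)) (δ : Fin n → ℕ) :
    b.repr (monomial p δ) = Finsupp.single (residue α δ) (ρ (δ / α)) := by
  conv_lhs => rw [← mul_div_add_residue (α := α) δ, ← monomial_mul_of_pow_eq_one p hp,
    ← hρ, ← hb, ← Algebra.smul_def, map_smul, b.repr_self, Finsupp.smul_single_one]

variable [Algebra k R] [IsScalarTower k R (SkewPoly k n p)]

theorem linearIndependent_monomial_val (hp : ∀ i j, i < j → p i j ^ α j = 1)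
    (hρ : ∀ q, algebraMap R A (ρ q) = monomial p (α * q))
    (hρspan : Submodule.span k (Set.range ρ) = ⊤) :
    LinearIndependent R fun β : (i : Fin n) → Fin (α i) =>
      monomial p fun i => (β i : ℕ) := by
  refine LinearIndependent.of_smul_of_span_eq_top hρspan ?_
  have hfam : (fun x : ((i : Fin n) → Fin (α i)) × (Fin n → ℕ) =>
      ρ x.2 • monomial p fun i => (x.1 i : ℕ)) =
      monomial p ∘ fun x => α * x.2 + fun i => (x.1 i : ℕ) := by
    funext x
    rw [Algebra.smul_def, hρ, monomial_mul_of_pow_eq_one p hp, Function.comp_apply]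
  rw [hfam]
  refine (linearIndependent_monomial p).comp _ fun x y hxy => ?_
  have hres := congrArg (residue α) hxy
  have hdiv := congrArg (· / α) hxy
  simp only [residue_add, residue_mul, residue_val, zero_add, mul_add_val_div] at hres hdiv
  exact Prod.ext hres hdiv

theorem span_monomial_val (hp : ∀ i j, i < j → p i j ^ α j = 1)
    (hρ : ∀ q, algebraMap R A (ρ q) = monomial p (α * q)) :
    Submodule.span R (Set.range fun β : (i : Fin n) → Fin (α i) =>
      monomial p fun i => (β i : ℕ)) = ⊤ := by
  have hle : Submodule.span k (Set.range (monomial p)) ≤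
      (Submodule.span R (Set.range fun β : (i : Fin n) → Fin (α i) =>
        monomial p fun i => (β i : ℕ))).restrictScalars k := by
    refine Submodule.span_le.2 ?_
    rintro _ ⟨δ, rfl⟩
    rw [← mul_div_add_residue (α := α) δ, ← monomial_mul_of_pow_eq_one p hp, ← hρ,
      ← Algebra.smul_def]
    exact Submodule.smul_mem _ _ (Submodule.subset_span (Set.mem_range_self _))
  rw [span_monomial] at hle
  exact eq_top_iff.2 fun x _ => hle trivial

theorem trace_mulLeft_monomial (hp : ∀ i j, i < j → p i j ^ α j = 1)
    (hρ : ∀ q, algebraMap R A (ρ q) = monomial p (α * q))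
    (hb : ∀ β, b β = monomial p fun i => (β i : ℕ)) (q : Fin n → ℕ)
    (β : (i : Fin n) → Fin (α i)) :
    LinearMap.trace R A (LinearMap.mulLeft R (monomial p (α * q + fun i => (β i : ℕ)))) =
      if β = 0 then (∏ i, α i) • ρ q else 0 := by
  classical
  rw [LinearMap.trace_eq_matrix_trace R b, Matrix.trace]
  simp only [Matrix.diag_apply, LinearMap.toMatrix_apply, LinearMap.mulLeft_apply, hb]
  split_ifs with hβ
  · subst hβ
    have hterm : ∀ w : (i : Fin n) → Fin (α i),
        b.repr (monomial p (α * q) * monomial p fun i => (w i : ℕ)) w = ρ q := by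
      intro w
      rw [monomial_mul_of_pow_eq_one p hp, repr_monomial p b hp hρ hb]
      simp
    have h0 : (α * q + fun i => ((0 : (i : Fin n) → Fin (α i)) i : ℕ)) = α * q := by
      ext; simp
    simp only [h0, hterm, Finset.sum_const, Finset.card_univ, Fintype.card_pi, Fintype.card_fin]
  · refine Finset.sum_eq_zero fun w _ => ?_
    rw [monomial_mul, ← algebraMap_smul R, map_smul, repr_monomial p b hp hρ hb,
      Finsupp.smul_apply, Finsupp.single_apply, if_neg, smul_zero]
    simpa using hβ

theorem trace_mulLeft_monomial_val_mul (hp : ∀ i j, i < j → p i j ^ α j = 1)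
    (hρ : ∀ q, algebraMap R A (ρ q) = monomial p (α * q))
    (hb : ∀ β, b β = monomial p fun i => (β i : ℕ)) (β γ : (i : Fin n) → Fin (α i)) :
    LinearMap.trace R A (LinearMap.mulLeft R
        ((monomial p fun i => (β i : ℕ)) * monomial p fun i => (γ i : ℕ))) =
      if γ = -β then
        twist p (fun i => (β i : ℕ)) (fun i => (γ i : ℕ)) (List.finRange n) •
          ((∏ i, α i) • ρ (((fun i => (β i : ℕ)) + fun i => (γ i : ℕ)) / α))
      else 0 := by
  have hδ : (fun i => (β i : ℕ)) + (fun i => (γ i : ℕ)) =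
      α * (((fun i => (β i : ℕ)) + fun i => (γ i : ℕ)) / α) +
        fun i => ((β + γ) i : ℕ) := by
    conv_lhs =>
      rw [← mul_div_add_residue (α := α) ((fun i => (β i : ℕ)) + fun i => (γ i : ℕ))]
    simp
  have hsmul : ∀ (c : R) (x : A), LinearMap.mulLeft R (c • x) = c • LinearMap.mulLeft R x :=
    fun c x => LinearMap.ext fun y => smul_mul_assoc c x y
  rw [monomial_mul, ← algebraMap_smul R, hsmul, map_smul]
  conv_lhs => rw [hδ]
  rw [trace_mulLeft_monomial p b hp hρ hb]
  simp only [add_eq_zero_iff_eq_neg', smul_ite, smul_zero, algebraMap_smul]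

theorem det_trace_mulLeft_monomial_val_mul (hp : ∀ i j, i < j → p i j ^ α j = 1)
    (hρ : ∀ q, algebraMap R A (ρ q) = monomial p (α * q))
    (hb : ∀ β, b β = monomial p fun i => (β i : ℕ)) :
    (Matrix.of fun β γ : (i : Fin n) → Fin (α i) => LinearMap.trace R A (LinearMap.mulLeft R
        ((monomial p fun i => (β i : ℕ)) * monomial p fun i => (γ i : ℕ)))).det =
      Equiv.Perm.sign (Equiv.neg ((i : Fin n) → Fin (α i))) *
        ∏ β : (i : Fin n) → Fin (α i),
          twist p (fun i => (β i : ℕ)) (fun i => ((-β) i : ℕ)) (List.finRange n) •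
            ((∏ i, α i) • ρ (((fun i => (β i : ℕ)) + fun i => ((-β) i : ℕ)) / α)) := by
  rw [← Matrix.det_of_ite_eq_perm]
  congr 1
  ext β γ
  rw [Matrix.of_apply, Matrix.of_apply, trace_mulLeft_monomial_val_mul p b hp hρ hb,
    Equiv.neg_apply]
  split_ifs with h
  · subst h; rfl
  · rfl

theorem algebraMap_det_trace_mulLeft_monomial_val_mul (hp : ∀ i j, i < j → p i j ^ α j = 1)
    (hρ : ∀ q, algebraMap R A (ρ q) = monomial p (α * q))
    (hb : ∀ β, b β = monomial p fun i => (β i : ℕ)) :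
    algebraMap R A (Matrix.of fun β γ : (i : Fin n) → Fin (α i) =>
        LinearMap.trace R A (LinearMap.mulLeft R
          ((monomial p fun i => (β i : ℕ)) * monomial p fun i => (γ i : ℕ)))).det =
      ((Equiv.Perm.sign (Equiv.neg ((i : Fin n) → Fin (α i))) : ℤ) *
          ∏ β : (i : Fin n) → Fin (α i),
            twist p (fun i => (β i : ℕ)) (fun i => ((-β) i : ℕ)) (List.finRange n) : k) •
        (((∏ i, α i : ℕ) : A) ^ (∏ i, α i) * monomial p ((∏ i, α i) • (α - 1))) := by
  have hdvd : ∀ β : (i : Fin n) → Fin (α i),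
      α * (((fun i => (β i : ℕ)) + fun i => ((-β) i : ℕ)) / α) =
        (fun i => (β i : ℕ)) + fun i => ((-β) i : ℕ) := by
    intro β
    set δ : Fin n → ℕ := (fun i => (β i : ℕ)) + fun i => ((-β) i : ℕ)
    conv_rhs => rw [← mul_div_add_residue (α := α) δ]
    simp [δ]
    rfl
  have hexp : α * ∑ β : (i : Fin n) → Fin (α i),
      ((fun i => (β i : ℕ)) + fun i => ((-β) i : ℕ)) / α = (∏ i, α i) • (α - 1) := by
    ext i
    simp only [Finset.mul_sum, hdvd, Finset.sum_apply, Pi.add_apply, sum_val_add_val_neg,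
      Pi.smul_apply, Pi.sub_apply, Pi.one_apply, smul_eq_mul]
  have hcard : Fintype.card ((i : Fin n) → Fin (α i)) = ∏ i, α i := by simp
  have hterm : ∀ (c : k) (x : R), c • ((∏ i, α i) • x) =
      algebraMap k R c * (((∏ i, α i : ℕ) : R) * x) := fun c x => by
    rw [nsmul_eq_mul, Algebra.smul_def]
  rw [det_trace_mulLeft_monomial_val_mul p b hp hρ hb, Finset.prod_congr rfl fun β _ => hterm _ _,
    Finset.prod_mul_distrib, Finset.prod_mul_distrib, Finset.prod_const, Finset.card_univ, hcard,
    ← map_prod, map_mul, map_mul, map_mul, map_pow, map_natCast, map_intCast,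
    ← IsScalarTower.algebraMap_apply, algebraMap_prod p hp hρ, hexp, Algebra.smul_def (R := k),
    map_mul, map_intCast, mul_assoc]

theorem exists_unit_algebraMap_det_trace_mulLeft_monomial_val_mul
    (hp : ∀ i j, i < j → p i j ^ α j = 1)
    (hρ : ∀ q, algebraMap R A (ρ q) = monomial p (α * q))
    (hb : ∀ β, b β = monomial p fun i => (β i : ℕ)) :
    ∃ c : kˣ, algebraMap R A (Matrix.of fun β γ : (i : Fin n) → Fin (α i) =>
        LinearMap.trace R A (LinearMap.mulLeft R
          ((monomial p fun i => (β i : ℕ)) * monomial p fun i => (γ i : ℕ)))).det =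
      (c : k) • (((∏ i, α i : ℕ) : A) ^ (∏ i, α i) *
        monomial p (α - 1) ^ (∏ i, α i)) := by
  have hunit : ∀ i j, i < j → IsUnit (p i j) := fun i j h =>
    IsUnit.of_pow_eq_one (hp i j h) (NeZero.ne (α j))
  have hT : IsUnit (((Equiv.Perm.sign (Equiv.neg ((i : Fin n) → Fin (α i))) : ℤ) : k) *
      ∏ β : (i : Fin n) → Fin (α i),
        twist p (fun i => (β i : ℕ)) (fun i => ((-β) i : ℕ)) (List.finRange n)) :=
    ((Equiv.Perm.sign _).isUnit.map (Int.castRingHom k)).mul <| IsUnit.prod_iff.2 fun _ _ =>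
      isUnit_twist p hunit _ _ (List.pairwise_lt_finRange n)
  have hU : IsUnit (∏ j ∈ Finset.range (∏ i, α i),
      twist p (j • (α - 1)) (α - 1) (List.finRange n)) :=
    IsUnit.prod_iff.2 fun _ _ => isUnit_twist p hunit _ _ (List.pairwise_lt_finRange n)
  refine ⟨hT.unit * hU.unit⁻¹, ?_⟩
  rw [algebraMap_det_trace_mulLeft_monomial_val_mul p b hp hρ hb, monomial_pow, mul_smul_comm,
    smul_smul, Units.val_mul, mul_assoc, IsUnit.val_inv_mul, mul_one, IsUnit.unit_spec]

end Center

end SkewPoly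

/-- Let `A = k_{p_{ij}}[x_1, …, x_n]` and let `R` be the central
subalgebra `k[x_1^{α_1}, …, x_n^{α_n}]` of `A` (`R` is realized as a commutative ring
with an injective algebra map to `A` whose range is `k⟨x_i^{α_i}⟩`).  Then `A` is a free
`R`-module of rank `r = ∏ α_i` with basis the monomials `x^β`, `0 ≤ β_i < α_i`, and
`det (tr (z_β z_γ)) = c ⬝ r^r ⬝ (∏ x_i^{α_i - 1})^r` for some `c ∈ k^×`, where `tr` is
the regular trace. -/
theorem discriminant_of_skew_polynomial_ring_over_monomial_center
    (k : Type*) [Field k] (n : ℕ) (p : Fin n → Fin n → k)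
    (α : Fin n → ℕ) (hα : ∀ i, 0 < α i)
    (R : Type*) [CommRing R] [Algebra k R] [Algebra R (SkewPoly k n p)]
    [IsScalarTower k R (SkewPoly k n p)]
    (hinj : Function.Injective (algebraMap R (SkewPoly k n p)))
    (hrange : (IsScalarTower.toAlgHom k R (SkewPoly k n p)).range =
      Algebra.adjoin k (Set.range fun i : Fin n => SkewPoly.X k n p i ^ (α i)))
    (z : ((i : Fin n) → Fin (α i)) → SkewPoly k n p)
    (hz : ∀ β, z β =
      ((List.finRange n).map (fun (i : Fin n) => SkewPoly.X k n p i ^ ((β i : ℕ)))).prod)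
    (f : SkewPoly k n p)
    (hf : f = ((List.finRange n).map (fun (i : Fin n) => SkewPoly.X k n p i ^ (α i - 1))).prod) :
    (∃ bas : Module.Basis ((i : Fin n) → Fin (α i)) R (SkewPoly k n p), ∀ β, bas β = z β) ∧
    (∃ c : kˣ,
      algebraMap R (SkewPoly k n p)
          (Matrix.det (Matrix.of fun β γ =>
            LinearMap.trace R (SkewPoly k n p)
              (LinearMap.mulLeft R (z β * z γ)))) =
        (c : k) • (((∏ i, α i : ℕ) : SkewPoly k n p) ^ (∏ i, α i) *
          f ^ (∏ i, α i))) := by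
  have : ∀ i, NeZero (α i) := fun i => ⟨(hα i).ne'⟩
  obtain rfl : z = fun β => SkewPoly.monomial p fun i => (β i : ℕ) := funext hz
  replace hf : f = SkewPoly.monomial p (α - 1) := hf
  have hmem : ∀ x, x ∈ Algebra.adjoin k (Set.range fun i => SkewPoly.X k n p i ^ α i) →
      ∃ s : R, algebraMap R _ s = x := fun x hx => by rw [← hrange] at hx; exact hx
  choose ρ hρ using fun q => hmem _ (SkewPoly.monomial_mul_mem_adjoin p (α := α) q)
  have hp : ∀ i j, i < j → p i j ^ α j = 1 := fun i j h => by
    obtain ⟨s, hs⟩ := hmem _ (Algebra.subset_adjoin (Set.mem_range_self j))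
    exact SkewPoly.pow_eq_one_of_commute p h (hs ▸ Algebra.commute_algebraMap_left s _)
  have hρspan := SkewPoly.span_range_eq_top_of_algebraMap_eq_monomial p hinj
    (fun s => hrange ▸ ⟨s, rfl⟩) hρ
  let b := Module.Basis.mk (SkewPoly.linearIndependent_monomial_val p hp hρ hρspan)
    (SkewPoly.span_monomial_val p hp hρ).ge
  have hb : ∀ β, b β = SkewPoly.monomial p fun i => (β i : ℕ) := Module.Basis.mk_apply _ _
  refine ⟨⟨b, hb⟩, ?_⟩
  rw [hf]
  exact SkewPoly.exists_unit_algebraMap_det_trace_mulLeft_monomial_val_mul p b hp hρ hb
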